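/- arXiv:2007.15441 — 6 statements merged into one kernel-verified Lean document; each statement's English description precedes it below -/
import Mathlib

section
/- Let M, N, L be positive constants and δ ∈ (0,1). Define f(y) = My - Ny^{1+δ} - Ly^{1-δ} for y > 0. Then sup_{y>0} f(y) > 0 if M² > 4LN, and sup_{y>0} f(y) = 0 if M² ≤ 4LN. -/
/-! With `t = y ^ δ` the function factors as `f y = y ^ (1 - δ) * (M t - N t² - L)`, so the sign of
`f` is the sign of a quadratic in `t` whose discriminant is `M² - 4LN`. If it is positive, `f` is
positive at `y = (M / 2N) ^ (1 / δ)`, the vertex of the quadratic. Otherwise `f ≤ 0`, while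
`f y → 0` as `y → 0⁺`, so the supremum is `0`. In both cases `f y ≤ y (M - N y ^ δ)` bounds `f`
above, so that `sSup` is the true supremum rather than its junk value. -/

open Real Set Filter Topology

namespace RpowTrinomial

noncomputable def rpowTrinomial (M N L δ y : ℝ) : ℝ :=
  M * y - N * y ^ (1 + δ) - L * y ^ (1 - δ)

variable {M N L δ y : ℝ}

lemma rpowTrinomial_eq_mul_quadratic (hy : 0 < y) :
    rpowTrinomial M N L δ y = y ^ (1 - δ) * (M * y ^ δ - N * (y ^ δ) ^ 2 - L) := by
  have hyδ : y ^ δ ≠ 0 := (rpow_pos_of_pos hy δ).ne'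
  rw [rpowTrinomial, rpow_add hy, rpow_sub hy, rpow_one]
  field_simp

lemma rpowTrinomial_le_mul_sub (hL : 0 ≤ L) (hy : 0 < y) :
    rpowTrinomial M N L δ y ≤ y * (M - N * y ^ δ) := by
  have hterm : 0 ≤ L * y ^ (1 - δ) := mul_nonneg hL (rpow_nonneg hy.le _)
  rw [rpowTrinomial, rpow_add hy, rpow_one]
  linarith

lemma mul_sub_mul_rpow_le (hM : 0 < M) (hN : 0 < N) (hδ : 0 < δ) (hy : 0 < y) :
    y * (M - N * y ^ δ) ≤ M * (M / N) ^ δ⁻¹ := by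
  set y₀ := (M / N) ^ δ⁻¹
  rcases le_total y y₀ with h | h
  · have : 0 ≤ N * y ^ δ := mul_nonneg hN.le (rpow_nonneg hy.le δ)
    nlinarith
  · have hy₀ : y₀ ^ δ = M / N := rpow_inv_rpow (div_pos hM hN).le hδ.ne'
    have : M / N ≤ y ^ δ := hy₀ ▸ rpow_le_rpow (by positivity) h hδ.le
    have : M ≤ N * y ^ δ := by rwa [div_le_iff₀' hN] at this
    have : 0 ≤ M * y₀ := by positivity
    nlinarith

lemma bddAbove_rpowTrinomial_image (hM : 0 < M) (hN : 0 < N) (hL : 0 ≤ L) (hδ : 0 < δ) :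
    BddAbove (rpowTrinomial M N L δ '' Ioi 0) := by
  refine ⟨M * (M / N) ^ δ⁻¹, ?_⟩
  rintro _ ⟨y, hy, rfl⟩
  exact (rpowTrinomial_le_mul_sub hL hy).trans (mul_sub_mul_rpow_le hM hN hδ hy)

lemma rpowTrinomial_pos_of_discrim_pos (hM : 0 < M) (hN : 0 < N) (hδ : δ ≠ 0)
    (hdisc : 4 * L * N < M ^ 2) : 0 < rpowTrinomial M N L δ ((M / (2 * N)) ^ δ⁻¹) := by
  have hvertex : 0 < M / (2 * N) := by positivity
  rw [rpowTrinomial_eq_mul_quadratic (rpow_pos_of_pos hvertex _),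
    rpow_inv_rpow hvertex.le hδ]
  have hquad : 0 < M * (M / (2 * N)) - N * (M / (2 * N)) ^ 2 - L := by
    field_simp
    nlinarith
  exact mul_pos (rpow_pos_of_pos (rpow_pos_of_pos hvertex _) _) hquad

lemma rpowTrinomial_nonpos_of_discrim_nonpos (hN : 0 < N) (hdisc : M ^ 2 ≤ 4 * L * N)
    (hy : 0 < y) : rpowTrinomial M N L δ y ≤ 0 := by
  rw [rpowTrinomial_eq_mul_quadratic hy]
  have hquad : M * y ^ δ - N * (y ^ δ) ^ 2 - L ≤ 0 := by
    nlinarith [sq_nonneg (2 * N * y ^ δ - M)]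
  exact mul_nonpos_of_nonneg_of_nonpos (rpow_nonneg hy.le _) hquad

lemma tendsto_rpowTrinomial_nhdsGT_zero (hδ : δ ∈ Ioo (-1) 1) :
    Tendsto (rpowTrinomial M N L δ) (𝓝[>] 0) (𝓝 0) := by
  have hcont : ContinuousAt (rpowTrinomial M N L δ) 0 := by
    unfold rpowTrinomial
    have := continuousAt_rpow_const 0 (1 + δ) (.inr (by linarith [hδ.1]))
    have := continuousAt_rpow_const 0 (1 - δ) (.inr (by linarith [hδ.2]))
    fun_prop
  have hzero : rpowTrinomial M N L δ 0 = 0 := by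
    simp [rpowTrinomial, zero_rpow (by linarith [hδ.1] : 1 + δ ≠ 0),
      zero_rpow (by linarith [hδ.2] : 1 - δ ≠ 0)]
  simpa only [hzero] using hcont.tendsto.mono_left (nhdsWithin_le_nhds (s := Ioi 0))

end RpowTrinomial

open RpowTrinomial in
theorem stmt0 (M N L δ : ℝ) (hM : 0 < M) (hN : 0 < N) (hL : 0 < L)
    (hδ : δ ∈ Set.Ioo (0:ℝ) 1)
    (f : ℝ → ℝ)
    (hf : ∀ y > 0, f y = M * y - N * y ^ (1 + δ) - L * y ^ (1 - δ)) :
    (M ^ 2 > 4 * L * N → 0 < sSup (f '' Set.Ioi 0)) ∧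
    (M ^ 2 ≤ 4 * L * N → sSup (f '' Set.Ioi 0) = 0) := by
  obtain ⟨hδ0, hδ1⟩ := hδ
  have himage : f '' Ioi 0 = rpowTrinomial M N L δ '' Ioi 0 := EqOn.image_eq hf
  have hbdd := bddAbove_rpowTrinomial_image hM hN hL.le hδ0
  rw [himage]
  refine ⟨fun hdisc => ?_, fun hdisc => le_antisymm ?_ ?_⟩
  · exact (rpowTrinomial_pos_of_discrim_pos hM hN hδ0.ne' hdisc).trans_le
      (le_csSup hbdd (mem_image_of_mem _ (rpow_pos_of_pos (by positivity) _)))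
  · exact csSup_le (nonempty_Ioi.image _) <| forall_mem_image.2 fun y hy =>
      rpowTrinomial_nonpos_of_discrim_nonpos hN hdisc hy
  · have hlim : Tendsto (rpowTrinomial M N L δ) (𝓝[>] 0) (𝓝 0) :=
      tendsto_rpowTrinomial_nhdsGT_zero ⟨by linarith, hδ1⟩
    refine le_of_tendsto hlim ?_
    filter_upwards [self_mem_nhdsWithin] with y hy
    exact le_csSup hbdd (mem_image_of_mem _ hy)
end

section
/- Let ω(z) = (z-1)e^z for z ∈ ℝ. For any r > 1, there exists a unique nonzero real z_r such that ω(z_r) = ω(-r·z_r), and moreover z_r ∈ (1 - 1/r, 1). -/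
open Real Set

/-!
Multiplying by `exp (r z)`, the equation `ω z = ω (-(r z))` becomes
`(1 - z) exp ((1 + r) z) = 1 + r z`, which has no solution outside `(-1/r, 1)` (one side is
positive and the other is not). Inside, taking logarithms turns it into `logRatio r z = 0`, and
`logRatio r` has derivative `(1 + r) z (r - 1 - r z) / ((1 - z)(1 + r z))`. Hence it decreases
to `logRatio r 0 = 0` on `(-1/r, 0]`, increases on `[0, 1 - 1/r]` and decreases on `[1 - 1/r, 1)`:
the only nonzero root lies in `(1 - 1/r, 1)`, and it exists by the intermediate value theorem.
-/

def IsCrossing (r z : ℝ) : Prop :=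
  (1 - z) * exp ((1 + r) * z) = 1 + r * z

lemma omega_eq_omega_neg_mul_iff {ω : ℝ → ℝ} (hω : ∀ z, ω z = (z - 1) * exp z)
    (r z : ℝ) : ω z = ω (-(r * z)) ↔ IsCrossing r z := by
  rw [IsCrossing, hω, hω, add_mul, one_mul, exp_add, exp_neg,
    eq_mul_inv_iff_mul_eq₀ (exp_pos _).ne']
  constructor <;> intro h <;> linarith

noncomputable def logRatio (r z : ℝ) : ℝ :=
  log (1 - z) + (1 + r) * z - log (1 + r * z)

section logRatio

variable {r z : ℝ}

lemma logRatio_zero (r : ℝ) : logRatio r 0 = 0 := by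
  simp [logRatio]

lemma logRatio_eq_log_sub_log (hz : z < 1) :
    logRatio r z = log ((1 - z) * exp ((1 + r) * z)) - log (1 + r * z) := by
  rw [log_mul (by linarith) (exp_pos _).ne', log_exp, logRatio]

lemma hasDerivAt_logRatio (hz : z < 1) (hrz : 0 < 1 + r * z) :
    HasDerivAt (logRatio r) ((1 + r) * z * (r - 1 - r * z) / ((1 - z) * (1 + r * z))) z := by
  have h₁ : HasDerivAt (fun z => log (1 - z)) (-1 / (1 - z)) z := by
    simpa using ((hasDerivAt_id z).const_sub 1).log (by simp; linarith)
  have h₂ : HasDerivAt (fun z => log (1 + r * z)) (r / (1 + r * z)) z := by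
    simpa using (((hasDerivAt_id z).const_mul r).const_add 1).log hrz.ne'
  refine ((h₁.add ((hasDerivAt_id z).const_mul (1 + r))).sub h₂).congr_deriv ?_
  have h₃ : 1 - z ≠ 0 := by linarith
  have h₄ : 1 + z * r ≠ 0 := by linarith
  field_simp
  ring

lemma continuousOn_logRatio {D : Set ℝ} (hD : ∀ z ∈ D, z < 1 ∧ 0 < 1 + r * z) :
    ContinuousOn (logRatio r) D := fun z hz =>
  (hasDerivAt_logRatio (hD z hz).1 (hD z hz).2).continuousAt.continuousWithinAt

lemma strictMonoOn_logRatio (hr : -1 < r) {D : Set ℝ} (hD : Convex ℝ D)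
    (hdom : ∀ z ∈ D, z < 1 ∧ 0 < 1 + r * z)
    (hpos : ∀ z ∈ interior D, 0 < z * (r - 1 - r * z)) :
    StrictMonoOn (logRatio r) D := by
  refine strictMonoOn_of_hasDerivWithinAt_pos hD (continuousOn_logRatio hdom)
    (fun z hz => (hasDerivAt_logRatio (hdom z (interior_subset hz)).1
      (hdom z (interior_subset hz)).2).hasDerivWithinAt) fun z hz => ?_
  obtain ⟨hz1, hrz⟩ := hdom z (interior_subset hz)
  have := hpos z hz
  exact div_pos (by nlinarith) (mul_pos (by linarith) hrz)

lemma strictAntiOn_logRatio (hr : -1 < r) {D : Set ℝ} (hD : Convex ℝ D)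
    (hdom : ∀ z ∈ D, z < 1 ∧ 0 < 1 + r * z)
    (hneg : ∀ z ∈ interior D, z * (r - 1 - r * z) < 0) :
    StrictAntiOn (logRatio r) D := by
  refine strictAntiOn_of_hasDerivWithinAt_neg hD (continuousOn_logRatio hdom)
    (fun z hz => (hasDerivAt_logRatio (hdom z (interior_subset hz)).1
      (hdom z (interior_subset hz)).2).hasDerivWithinAt) fun z hz => ?_
  obtain ⟨hz1, hrz⟩ := hdom z (interior_subset hz)
  have := hneg z hz
  exact div_neg_of_neg_of_pos (by nlinarith) (mul_pos (by linarith) hrz)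

lemma strictAntiOn_logRatio_Ioc (hr : 1 ≤ r) : StrictAntiOn (logRatio r) (Ioc (-1 / r) 0) := by
  have hr0 : 0 < r := by linarith
  refine strictAntiOn_logRatio (by linarith) (convex_Ioc _ _)
    (fun z hz => ⟨by linarith [hz.2], ?_⟩) fun z hz => ?_
  · have := (div_lt_iff₀' hr0).1 hz.1
    linarith
  · rw [interior_Ioc] at hz
    exact mul_neg_of_neg_of_pos hz.2 (by nlinarith [hz.2])

lemma strictMonoOn_logRatio_Icc (hr : 0 < r) : StrictMonoOn (logRatio r) (Icc 0 (1 - 1 / r)) := by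
  have hra : r * (1 - 1 / r) = r - 1 := by field_simp
  have h1r : 0 < 1 / r := by positivity
  refine strictMonoOn_logRatio (by linarith) (convex_Icc _ _)
    (fun z hz => ⟨by linarith [hz.2], by nlinarith [hz.1]⟩) fun z hz => ?_
  rw [interior_Icc] at hz
  have : r * z < r - 1 := hra ▸ mul_lt_mul_of_pos_left hz.2 hr
  exact mul_pos hz.1 (by linarith)

lemma strictAntiOn_logRatio_Ico (hr : 1 ≤ r) : StrictAntiOn (logRatio r) (Ico (1 - 1 / r) 1) := by
  have hr0 : 0 < r := by linarith
  have hra : r * (1 - 1 / r) = r - 1 := by field_simp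
  have ha : 0 ≤ 1 - 1 / r := sub_nonneg.2 ((div_le_one hr0).2 hr)
  refine strictAntiOn_logRatio (by linarith) (convex_Ico _ _)
    (fun z hz => ⟨hz.2, by nlinarith [hz.1]⟩) fun z hz => ?_
  rw [interior_Ico] at hz
  have : r - 1 < r * z := hra ▸ mul_lt_mul_of_pos_left hz.1 hr0
  exact mul_neg_of_pos_of_neg (ha.trans_lt hz.1) (by linarith)

lemma IsCrossing.bounds (hr : 0 < r) (h : IsCrossing r z) : z < 1 ∧ 0 < 1 + r * z := by
  rw [IsCrossing] at h
  have hz : z < 1 := by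
    by_contra! hz
    have : (1 - z) * exp ((1 + r) * z) ≤ 0 :=
      mul_nonpos_of_nonpos_of_nonneg (by linarith) (exp_pos _).le
    nlinarith
  exact ⟨hz, h ▸ mul_pos (by linarith) (exp_pos _)⟩

lemma isCrossing_iff_logRatio_eq_zero (hz : z < 1) (hrz : 0 < 1 + r * z) :
    IsCrossing r z ↔ logRatio r z = 0 := by
  rw [IsCrossing, logRatio_eq_log_sub_log hz, sub_eq_zero]
  exact (log_injOn_pos.eq_iff (mul_pos (by linarith) (exp_pos _)) hrz).symm

lemma lt_of_logRatio_pos (hz : z < 1) (hrz : 0 < 1 + r * z) (h : 0 < logRatio r z) :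
    1 + r * z < (1 - z) * exp ((1 + r) * z) := by
  rwa [logRatio_eq_log_sub_log hz, sub_pos, log_lt_log_iff hrz (mul_pos (by linarith) (exp_pos _))]
    at h

lemma IsCrossing.mem_Ioo (hr : 1 < r) (h : IsCrossing r z) (hz0 : z ≠ 0) :
    z ∈ Ioo (1 - 1 / r) 1 := by
  have hr0 : 0 < r := by linarith
  obtain ⟨hz1, hrz⟩ := h.bounds hr0
  have hlog := (isCrossing_iff_logRatio_eq_zero hz1 hrz).1 h
  refine ⟨?_, hz1⟩
  by_contra! ha
  have hlt : logRatio r 0 < logRatio r z := by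
    rcases hz0.lt_or_gt with hneg | hpos
    · have hrz' : -1 / r < z := (div_lt_iff₀' hr0).2 (by linarith)
      exact strictAntiOn_logRatio_Ioc hr.le ⟨hrz', hneg.le⟩ ⟨hrz'.trans hneg, le_rfl⟩ hneg
    · exact strictMonoOn_logRatio_Icc hr0 ⟨le_rfl, hpos.le.trans ha⟩ ⟨hpos.le, ha⟩ hpos
  rw [logRatio_zero, hlog] at hlt
  exact lt_irrefl 0 hlt

lemma exists_isCrossing_mem_Ioo (hr : 1 < r) : ∃ z ∈ Ioo (1 - 1 / r) 1, IsCrossing r z := by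
  have hr0 : 0 < r := by linarith
  set a := 1 - 1 / r
  have ha0 : 0 < a := sub_pos.2 ((div_lt_one hr0).2 hr)
  have ha1 : a < 1 := sub_lt_self 1 (by positivity)
  have hra : 0 < 1 + r * a := by positivity
  have hlog : 0 < logRatio r a :=
    logRatio_zero r ▸ strictMonoOn_logRatio_Icc hr0 ⟨le_rfl, ha0.le⟩ ⟨ha0.le, le_rfl⟩ ha0
  have hgap := lt_of_logRatio_pos ha1 hra hlog
  have hcont : ContinuousOn (fun z => 1 + r * z - (1 - z) * exp ((1 + r) * z)) (Icc a 1) := by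
    fun_prop
  obtain ⟨z, hz, hz0⟩ := intermediate_value_Ioo ha1.le hcont
    (show (0 : ℝ) ∈ Ioo _ _ from ⟨by linarith, by norm_num; linarith⟩)
  exact ⟨z, hz, (sub_eq_zero.1 hz0).symm⟩

lemma IsCrossing.eq (hr : 1 < r) {w : ℝ} (hw : IsCrossing r w) (hz : IsCrossing r z)
    (hw0 : w ≠ 0) (hz0 : z ≠ 0) : w = z := by
  have hr0 : 0 < r := by linarith
  obtain ⟨hw1, hrw⟩ := hw.bounds hr0
  obtain ⟨hz1, hrz⟩ := hz.bounds hr0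
  refine (strictAntiOn_logRatio_Ico hr.le).injOn (Ioo_subset_Ico_self (hw.mem_Ioo hr hw0))
    (Ioo_subset_Ico_self (hz.mem_Ioo hr hz0)) ?_
  exact ((isCrossing_iff_logRatio_eq_zero hw1 hrw).1 hw).trans
    ((isCrossing_iff_logRatio_eq_zero hz1 hrz).1 hz).symm

end logRatio

theorem stmt3 (r : ℝ) (hr : 1 < r) (ω : ℝ → ℝ)
    (hω : ∀ z, ω z = (z - 1) * Real.exp z) :
    ∃ z : ℝ, z ∈ Set.Ioo (1 - 1 / r) 1 ∧ z ≠ 0 ∧ ω z = ω (-(r * z)) ∧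
      ∀ w : ℝ, w ≠ 0 → ω w = ω (-(r * w)) → w = z := by
  obtain ⟨z, hz, hcross⟩ := exists_isCrossing_mem_Ioo hr
  have hz0 : z ≠ 0 := ((sub_pos.2 ((div_lt_one (by linarith)).2 hr)).trans hz.1).ne'
  refine ⟨z, hz, hz0, (omega_eq_omega_neg_mul_iff hω r z).2 hcross, fun w hw0 hw => ?_⟩
  exact ((omega_eq_omega_neg_mul_iff hω r w).1 hw).eq hr hcross hw0 hz0
end

section
/- Let A, B : ℝ → ℝ be twice differentiable functions with A''(λ) > 0 and B''(λ) > 0 for all λ, and let g, h > 0 be constants. Define D(λ) = ½[A(λ) + B(λ) + √((A(λ)-B(λ))² + 4gh)]. Then D''(λ) > 0 for all λ ∈ ℝ; in fact D''(λ) ≥ min{A''(λ), B''(λ)}. -/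
/-!
Write `f = A - B`, `c = 4gh` and `S = √(f² + c)`, so that `D = (A + B + S) / 2`. Differentiating
twice, `S'' = c f'² / S³ + (f / S) f''`, and the first term is nonnegative. With `t = f / S`, which
satisfies `|t| ≤ 1` because `c > 0`, this gives `D'' ≥ ((1 + t) A'' + (1 - t) B'') / 2`, a convex
combination of `A''` and `B''`, hence at least their minimum.
-/

open Real

theorem min_le_add_add_mul_sub_div_two {P Q t : ℝ} (ht : |t| ≤ 1) :
    min P Q ≤ (P + Q + t * (P - Q)) / 2 := by
  rcases abs_le.mp ht with ⟨ht₁, ht₂⟩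
  rcases le_total P Q with hPQ | hPQ
  · rw [min_eq_left hPQ]
    nlinarith
  · rw [min_eq_right hPQ]
    nlinarith

section SqrtSqAddConst

variable {f : ℝ → ℝ} {c : ℝ}

theorem HasDerivAt.sqrt_sq_add_const (hc : 0 < c) {f' x : ℝ} (hf : HasDerivAt f f' x) :
    HasDerivAt (fun y => √(f y ^ 2 + c)) (f x * f' / √(f x ^ 2 + c)) x := by
  have hpos : 0 < f x ^ 2 + c := by positivity
  convert ((hf.fun_pow 2).add_const c).sqrt hpos.ne' using 1
  field_simp
  ring

theorem deriv_sqrt_sq_add_const (hc : 0 < c) (hf : Differentiable ℝ f) :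
    deriv (fun y => √(f y ^ 2 + c)) = fun y => f y * deriv f y / √(f y ^ 2 + c) :=
  funext fun y => ((hf y).hasDerivAt.sqrt_sq_add_const hc).deriv

theorem hasDerivAt_deriv_sqrt_sq_add_const (hc : 0 < c) (hf : Differentiable ℝ f)
    (hf' : Differentiable ℝ (deriv f)) (x : ℝ) :
    HasDerivAt (deriv fun y => √(f y ^ 2 + c))
      (c * deriv f x ^ 2 / √(f x ^ 2 + c) ^ 3 + f x * deriv (deriv f) x / √(f x ^ 2 + c)) x := by
  have hpos : 0 < √(f x ^ 2 + c) := sqrt_pos.mpr (by positivity)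
  have hsq : √(f x ^ 2 + c) ^ 2 = f x ^ 2 + c := sq_sqrt (by positivity)
  rw [deriv_sqrt_sq_add_const hc hf]
  refine (((hf x).hasDerivAt.fun_mul (hf' x).hasDerivAt).fun_div
    ((hf x).hasDerivAt.sqrt_sq_add_const hc) hpos.ne').congr_deriv ?_
  field_simp
  rw [hsq]
  ring

theorem div_sqrt_mul_deriv_deriv_le_deriv_deriv_sqrt_sq_add_const (hc : 0 < c)
    (hf : Differentiable ℝ f) (hf' : Differentiable ℝ (deriv f)) (x : ℝ) :
    f x / √(f x ^ 2 + c) * deriv (deriv f) x ≤ deriv (deriv fun y => √(f y ^ 2 + c)) x := by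
  rw [(hasDerivAt_deriv_sqrt_sq_add_const hc hf hf' x).deriv, div_mul_eq_mul_div]
  have : 0 ≤ c * deriv f x ^ 2 / √(f x ^ 2 + c) ^ 3 := by positivity
  linarith

theorem abs_div_sqrt_sq_add_const_le_one (hc : 0 < c) (a : ℝ) : |a / √(a ^ 2 + c)| ≤ 1 := by
  have hpos : 0 < √(a ^ 2 + c) := sqrt_pos.mpr (by positivity)
  rw [abs_div, abs_of_pos hpos, div_le_one hpos]
  exact abs_le_sqrt (by linarith)

end SqrtSqAddConst

theorem deriv_fun_add_add_div_two {a b c : ℝ → ℝ} (ha : Differentiable ℝ a)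
    (hb : Differentiable ℝ b) (hc : Differentiable ℝ c) :
    deriv (fun y => (a y + b y + c y) / 2) = fun y => (deriv a y + deriv b y + deriv c y) / 2 :=
  funext fun y =>
    ((((ha y).hasDerivAt.add (hb y).hasDerivAt).add (hc y).hasDerivAt).div_const 2).deriv

theorem stmt8 (A B : ℝ → ℝ) (g h : ℝ) (hg : 0 < g) (hh : 0 < h)
    (hA1 : Differentiable ℝ A) (hA2 : Differentiable ℝ (deriv A))
    (hB1 : Differentiable ℝ B) (hB2 : Differentiable ℝ (deriv B))
    (hA'' : ∀ lam, 0 < deriv (deriv A) lam)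
    (hB'' : ∀ lam, 0 < deriv (deriv B) lam)
    (D : ℝ → ℝ)
    (hD : ∀ lam, D lam =
      (A lam + B lam + Real.sqrt ((A lam - B lam) ^ 2 + 4 * g * h)) / 2) :
    ∀ lam : ℝ,
      min (deriv (deriv A) lam) (deriv (deriv B) lam) ≤ deriv (deriv D) lam ∧
      0 < deriv (deriv D) lam := by
  intro lam
  have hc : 0 < 4 * g * h := by positivity
  have hf : Differentiable ℝ fun y => A y - B y := hA1.sub hB1
  have hf_deriv : deriv (fun y => A y - B y) = fun y => deriv A y - deriv B y :=
    funext fun y => deriv_fun_sub (hA1 y) (hB1 y)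
  have hf' : Differentiable ℝ (deriv fun y => A y - B y) := hf_deriv ▸ hA2.sub hB2
  set s : ℝ → ℝ := fun y => √((A y - B y) ^ 2 + 4 * g * h)
  have hs : Differentiable ℝ s := fun y =>
    ((hf y).hasDerivAt.sqrt_sq_add_const hc).differentiableAt
  have hs' : Differentiable ℝ (deriv s) := fun y =>
    (hasDerivAt_deriv_sqrt_sq_add_const hc hf hf' y).differentiableAt
  have hD'' : deriv (deriv D) lam =
      (deriv (deriv A) lam + deriv (deriv B) lam + deriv (deriv s) lam) / 2 := by
    rw [funext hD, deriv_fun_add_add_div_two hA1 hB1 hs, deriv_fun_add_add_div_two hA2 hB2 hs']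
  have hs'' := div_sqrt_mul_deriv_deriv_le_deriv_deriv_sqrt_sq_add_const hc hf hf' lam
  rw [hf_deriv, deriv_fun_sub (hA2 lam) (hB2 lam)] at hs''
  have hmin : min (deriv (deriv A) lam) (deriv (deriv B) lam) ≤ deriv (deriv D) lam := by
    rw [hD'']
    calc _ ≤ (deriv (deriv A) lam + deriv (deriv B) lam + (A lam - B lam) / s lam *
            (deriv (deriv A) lam - deriv (deriv B) lam)) / 2 :=
          min_le_add_add_mul_sub_div_two (abs_div_sqrt_sq_add_const_le_one hc _)
      _ ≤ _ := by gcongr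
  exact ⟨hmin, (lt_min (hA'' lam) (hB'' lam)).trans_le hmin⟩
end

section
/- Let k : ℝ → ℝ be a nonnegative probability density with ∫ k(x)e^{λx} dx < ∞ for all λ. Define A(λ) = ∫ k(x)e^{λx} dx - 1 - α with α > 0. If k has positive mass on both (0,∞) and (-∞,0) (i.e., k(x⁺) > 0, k(x⁻) > 0 at some continuity points x⁺ > 0 > x⁻ with k continuous), then λA'(λ) - A(λ) = ∫ k(x)e^{λx}(λx - 1) dx + 1 + α → +∞ as |λ| → ∞. -/
/-!
Let `μ` be the measure with density `k`. Then `λ A'(λ) - A(λ) - 1 - α = ∫ e^{λx} (λx - 1) dμ`,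
and the integrand is bounded below by `-1` because `e^u (u - 1) ≥ -1`. Since `k` is continuous
and `k(x⁺) > 0`, `μ` gives some mass `c > 0` to a half-line `[a, ∞)` with `a > 0`, so for
`λ ≥ 1/a` the integral is at least `c e^{λa} (λa - 1) - μ(ℝ) → ∞`. The limit `λ → -∞` is the
same argument applied to `x ↦ -x`, using `k(x⁻) > 0`.
-/

open Real Set Filter MeasureTheory ProbabilityTheory

section WithDensity

variable {Ω : Type*} [MeasurableSpace Ω] {μ : Measure Ω} {f : Ω → ℝ}

lemma integral_withDensity_ofReal (hf : Measurable f) (hf0 : ∀ ω, 0 ≤ f ω) (g : Ω → ℝ) :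
    ∫ ω, g ω ∂μ.withDensity (fun ω => ENNReal.ofReal (f ω)) = ∫ ω, f ω * g ω ∂μ := by
  rw [integral_withDensity_eq_integral_toReal_smul hf.ennreal_ofReal
    (.of_forall fun _ => ENNReal.ofReal_lt_top)]
  simp [ENNReal.toReal_ofReal (hf0 _)]

lemma integrable_withDensity_ofReal_iff (hf : Measurable f) (hf0 : ∀ ω, 0 ≤ f ω) {g : Ω → ℝ} :
    Integrable g (μ.withDensity fun ω => ENNReal.ofReal (f ω)) ↔
      Integrable (fun ω => f ω * g ω) μ := by
  rw [integrable_withDensity_iff hf.ennreal_ofReal (.of_forall fun _ => ENNReal.ofReal_lt_top)]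
  simp [ENNReal.toReal_ofReal (hf0 _), mul_comm]

lemma withDensity_ofReal_pos_of_isOpen [TopologicalSpace Ω] [OpensMeasurableSpace Ω]
    [μ.IsOpenPosMeasure] (hf : Continuous f) {U : Set Ω} (hU : IsOpen U) {x : Ω} (hxU : x ∈ U)
    (hfx : 0 < f x) : 0 < μ.withDensity (fun ω => ENNReal.ofReal (f ω)) U := by
  rw [pos_iff_ne_zero, Ne, withDensity_apply_eq_zero' hf.measurable.ennreal_ofReal.aemeasurable]
  have hpos : {ω | ENNReal.ofReal (f ω) ≠ 0} = {ω | 0 < f ω} := by ext; simp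
  rw [hpos]
  exact (isOpen_lt continuous_const hf).inter hU |>.measure_ne_zero μ ⟨x, hfx, hxU⟩

end WithDensity

lemma neg_one_le_exp_mul_sub_one (u : ℝ) : -1 ≤ exp u * (u - 1) := by
  have h := add_one_le_exp (-u)
  have h' : exp u * exp (-u) = 1 := by rw [← exp_add, add_neg_cancel, exp_zero]
  nlinarith [exp_pos u]

lemma tendsto_exp_mul_sub_one_atTop : Tendsto (fun u => exp u * (u - 1)) atTop atTop :=
  tendsto_exp_atTop.atTop_mul_atTop₀ (tendsto_atTop_add_const_right _ (-1) tendsto_id)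

namespace ProbabilityTheory

variable {Ω : Type*} [MeasurableSpace Ω] {μ : Measure Ω} {X : Ω → ℝ}

lemma exists_pos_measure_le_of_measure_pos (hpos : 0 < μ {ω | 0 < X ω}) :
    ∃ a > 0, 0 < μ {ω | a ≤ X ω} := by
  have hunion : {ω | 0 < X ω} = ⋃ n : ℕ, {ω | 1 / (n + 1 : ℝ) ≤ X ω} := by
    ext ω
    simp only [mem_ofPred_eq, mem_iUnion]
    refine ⟨fun h => ?_, fun ⟨n, hn⟩ => lt_of_lt_of_le (by positivity) hn⟩
    obtain ⟨n, hn⟩ := exists_nat_one_div_lt h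
    exact ⟨n, hn.le⟩
  rw [hunion] at hpos
  obtain ⟨n, hn⟩ := exists_measure_pos_of_not_measure_iUnion_null hpos.ne'
  exact ⟨_, by positivity, hn⟩

lemma integrable_mul_exp_mul (hX : ∀ t, Integrable (fun ω => exp (t * X ω)) μ) (t : ℝ) :
    Integrable (fun ω => X ω * exp (t * X ω)) μ := by
  simpa using integrable_pow_mul_exp_of_mem_interior_integrableExpSet
    (by simp [integrableExpSet, hX] : t ∈ interior (integrableExpSet X μ)) 1

lemma mul_deriv_mgf_sub_mgf (hX : ∀ t, Integrable (fun ω => exp (t * X ω)) μ) (t : ℝ) :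
    t * deriv (mgf X μ) t - mgf X μ t = ∫ ω, exp (t * X ω) * (t * X ω - 1) ∂μ := by
  rw [deriv_mgf (by simp [integrableExpSet, hX]), mgf, ← integral_const_mul,
    ← integral_sub ((integrable_mul_exp_mul hX t).const_mul t) (hX t)]
  congr 1 with ω
  ring

lemma integrable_exp_mul_mul_sub_one (hX : ∀ t, Integrable (fun ω => exp (t * X ω)) μ) (t : ℝ) :
    Integrable (fun ω => exp (t * X ω) * (t * X ω - 1)) μ :=
  (((integrable_mul_exp_mul hX t).const_mul t).sub (hX t)).congr
    (.of_forall fun ω => by simp only [Pi.sub_apply]; ring)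

variable [IsFiniteMeasure μ]

lemma tendsto_integral_exp_mul_sub_one_atTop (hX : Measurable X)
    (hexp : ∀ t, Integrable (fun ω => exp (t * X ω)) μ) (hpos : 0 < μ {ω | 0 < X ω}) :
    Tendsto (fun t => ∫ ω, exp (t * X ω) * (t * X ω - 1) ∂μ) atTop atTop := by
  obtain ⟨a, ha, hμa⟩ := exists_pos_measure_le_of_measure_pos hpos
  set s := {ω | a ≤ X ω}
  have hs : MeasurableSet s := measurableSet_le measurable_const hX
  have hc : 0 < μ.real s := ENNReal.toReal_pos hμa.ne' (measure_ne_top μ s)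
  have hlower : ∀ t, 1 / a ≤ t →
      exp (t * a) * (t * a - 1) * μ.real s - μ.real univ ≤
        ∫ ω, exp (t * X ω) * (t * X ω - 1) ∂μ := by
    intro t ht
    have hta : 1 ≤ t * a := by rwa [div_le_iff₀ ha] at ht
    have ht0 : 0 ≤ t := by nlinarith
    calc exp (t * a) * (t * a - 1) * μ.real s - μ.real univ
        = ∫ ω, s.indicator (fun _ => exp (t * a) * (t * a - 1)) ω - 1 ∂μ := by
          rw [integral_sub ((integrable_const _).indicator hs) (integrable_const _),
            integral_indicator_const _ hs]
          simp [mul_comm]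
      _ ≤ ∫ ω, exp (t * X ω) * (t * X ω - 1) ∂μ := by
          refine integral_mono (((integrable_const _).indicator hs).sub (integrable_const _))
            (integrable_exp_mul_mul_sub_one hexp t) fun ω => ?_
          by_cases hω : ω ∈ s
          · have hax : t * a ≤ t * X ω := mul_le_mul_of_nonneg_left hω ht0
            simp only [indicator_of_mem hω]
            have := mul_le_mul (exp_le_exp.mpr hax) (sub_le_sub_right hax 1) (by linarith)
              (exp_pos _).le
            linarith
          · simpa [indicator_of_notMem hω] using neg_one_le_exp_mul_sub_one (t * X ω)
  refine tendsto_atTop_mono' _ (eventually_ge_atTop (1 / a) |>.mono hlower) ?_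
  exact tendsto_atTop_add_const_right _ _ <|
    (tendsto_exp_mul_sub_one_atTop.comp (tendsto_id.atTop_mul_const ha)).atTop_mul_const hc

lemma tendsto_integral_exp_mul_sub_one_atBot (hX : Measurable X)
    (hexp : ∀ t, Integrable (fun ω => exp (t * X ω)) μ) (hneg : 0 < μ {ω | X ω < 0}) :
    Tendsto (fun t => ∫ ω, exp (t * X ω) * (t * X ω - 1) ∂μ) atBot atTop := by
  have h := tendsto_integral_exp_mul_sub_one_atTop (X := fun ω => -X ω) hX.neg
    (fun t => by simpa only [mul_neg, neg_mul] using hexp (-t)) (by simpa using hneg)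
  simpa only [neg_mul_neg, Function.comp_def] using h.comp tendsto_neg_atBot_atTop

end ProbabilityTheory

theorem stmt13_general (k : ℝ → ℝ) (α : ℝ)
    (hk_cont : Continuous k) (hk_nonneg : ∀ x, 0 ≤ k x)
    (hk_exp : ∀ lam : ℝ, Integrable (fun x => k x * Real.exp (lam * x)))
    (xp : ℝ) (hxp : 0 < xp) (hkxp : 0 < k xp)
    (xm : ℝ) (hxm : xm < 0) (hkxm : 0 < k xm)
    (A : ℝ → ℝ)
    (hA : ∀ lam, A lam = (∫ x : ℝ, k x * Real.exp (lam * x)) - 1 - α) :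
    (∀ lam : ℝ, lam * deriv A lam - A lam =
      (∫ x : ℝ, k x * Real.exp (lam * x) * (lam * x - 1)) + 1 + α) ∧
    Tendsto (fun lam => lam * deriv A lam - A lam) atTop atTop ∧
    Tendsto (fun lam => lam * deriv A lam - A lam) atBot atTop := by
  set μ := volume.withDensity fun x => ENNReal.ofReal (k x)
  have hk_meas := hk_cont.measurable
  have hμ_exp : ∀ t, Integrable (fun x => exp (t * x)) μ := fun t =>
    (integrable_withDensity_ofReal_iff hk_meas hk_nonneg).2 (hk_exp t)
  have : IsFiniteMeasure μ :=
    isFiniteMeasure_withDensity_ofReal (by simpa using (hk_exp 0).hasFiniteIntegral)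
  have hA_mgf : A = fun t => mgf (fun x => x) μ t - 1 - α := by
    funext t
    rw [hA, mgf, integral_withDensity_ofReal hk_meas hk_nonneg]
  have hkey : ∀ t, t * deriv A t - A t = (∫ x, exp (t * x) * (t * x - 1) ∂μ) + 1 + α := by
    intro t
    rw [← mul_deriv_mgf_sub_mgf hμ_exp, hA_mgf, deriv_sub_const, deriv_sub_const]
    ring
  refine ⟨fun t => ?_, ?_, ?_⟩
  · rw [hkey, integral_withDensity_ofReal hk_meas hk_nonneg]
    simp only [mul_assoc]
  · refine .congr (fun t => (hkey t).symm) ?_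
    exact tendsto_atTop_add_const_right _ _ <| tendsto_atTop_add_const_right _ _ <|
      tendsto_integral_exp_mul_sub_one_atTop measurable_id hμ_exp
        (withDensity_ofReal_pos_of_isOpen hk_cont isOpen_Ioi hxp hkxp)
  · refine .congr (fun t => (hkey t).symm) ?_
    exact tendsto_atTop_add_const_right _ _ <| tendsto_atTop_add_const_right _ _ <|
      tendsto_integral_exp_mul_sub_one_atBot measurable_id hμ_exp
        (withDensity_ofReal_pos_of_isOpen hk_cont isOpen_Iio hxm hkxm)

theorem stmt13 (k : ℝ → ℝ) (α : ℝ) (hα : 0 < α)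
    (hk_cont : Continuous k) (hk_nonneg : ∀ x, 0 ≤ k x)
    (hk_int : ∫ x : ℝ, k x = 1)
    (hk_exp : ∀ lam : ℝ, Integrable (fun x => k x * Real.exp (lam * x)))
    (xp : ℝ) (hxp : 0 < xp) (hkxp : 0 < k xp)
    (xm : ℝ) (hxm : xm < 0) (hkxm : 0 < k xm)
    (A : ℝ → ℝ)
    (hA : ∀ lam, A lam = (∫ x : ℝ, k x * Real.exp (lam * x)) - 1 - α) :
    (∀ lam : ℝ, lam * deriv A lam - A lam =
      (∫ x : ℝ, k x * Real.exp (lam * x) * (lam * x - 1)) + 1 + α) ∧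
    Tendsto (fun lam => lam * deriv A lam - A lam) atTop atTop ∧
    Tendsto (fun lam => lam * deriv A lam - A lam) atBot atTop :=
  stmt13_general k α hk_cont hk_nonneg hk_exp xp hxp hkxp xm hxm hkxm A hA
end

section
/- For r > 1, let z_r ∈ (1 - 1/r, 1) be the unique nonzero solution of ω(z) = ω(-rz), where ω(z) = (z-1)e^z, i.e., (z-1)e^z = (-rz-1)e^{-rz}. Define Φ(r) = e^{z_r}/(1 + r·z_r). Then dΦ/dr < 0; equivalently, the map r ↦ e^{z_r}/(1+r z_r) is strictly decreasing on (1, ∞). -/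
open Real Set


noncomputable def fB (x : ℝ) : ℝ := x - Real.log (1 + x)

lemma hasDerivAt_fB {x : ℝ} (hx : -1 < x) : HasDerivAt fB (x / (1 + x)) x := by
  have h1 : (0:ℝ) < 1 + x := by linarith
  have hlog : HasDerivAt (fun y : ℝ => Real.log (1 + y)) (1 / (1 + x)) x := by
    have := (Real.hasDerivAt_log (ne_of_gt h1)).comp x
      ((hasDerivAt_id x).const_add 1)
    exact this.congr_deriv (by simp)
  have := (hasDerivAt_id x).sub hlog
  refine this.congr_deriv ?_
  field_simp; ring

lemma fB_strictMonoOn : StrictMonoOn fB (Ici 0) := by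
  apply strictMonoOn_of_deriv_pos (convex_Ici 0)
  · intro x hx
    exact ((hasDerivAt_fB (by simp at hx; linarith)).continuousAt).continuousWithinAt
  · intro x hx
    simp only [interior_Ici, mem_Ioi] at hx
    rw [(hasDerivAt_fB (by linarith)).deriv]
    positivity

lemma fB_neg_pos {z : ℝ} (hz : z ∈ Ioo (0:ℝ) 1) : 0 < fB (-z) := by
  obtain ⟨h0, h1⟩ := hz
  have := Real.log_lt_sub_one_of_pos (x := 1 - z) (by linarith) (by intro h; rw [sub_eq_iff_eq_add] at h; norm_num at h; exact absurd h (ne_of_gt h0))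
  simp only [fB]
  have : Real.log (1 + -z) < -z := by
    have h2 : (1:ℝ) + -z = 1 - z := by ring
    rw [h2]; linarith
  linarith

-- key automatic inequality: fB(-z) < fB(z/(1-z))
lemma phi_pos {s : ℝ} (hs : s ∈ Ioo (0:ℝ) 1) : 0 < 1 / s - s + 2 * Real.log s := by
  obtain ⟨h0, h1⟩ := hs
  set φ : ℝ → ℝ := fun s => 1 / s - s + 2 * Real.log s with hφ
  have hderiv' : ∀ x : ℝ, 0 < x → HasDerivAt φ (-(1/x - 1)^2) x := by
    intro x hx0
    have h1 : HasDerivAt (fun y : ℝ => 1 / y) (-(1/x^2)) x := by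
      simpa using (hasDerivAt_inv (ne_of_gt hx0))
    have h2 := ((h1.sub (hasDerivAt_id x)).add ((Real.hasDerivAt_log (ne_of_gt hx0)).const_mul 2))
    refine h2.congr_deriv ?_
    field_simp
    ring
  have hanti : StrictAntiOn φ (Ioc (0:ℝ) 1) := by
    apply strictAntiOn_of_deriv_neg (convex_Ioc 0 1)
    · intro x hx
      obtain ⟨hx0, hx1⟩ := hx
      exact ((hderiv' x hx0).continuousAt).continuousWithinAt
    · intro x hx
      rw [interior_Ioc] at hx
      rw [(hderiv' x hx.1).deriv]
      have : 1/x - 1 ≠ 0 := by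
        have : 1 < 1/x := one_lt_one_div hx.1 hx.2
        intro h; linarith
      have h2 : 0 < (1/x-1)^2 := by positivity
      linarith
  have := hanti ⟨h0, le_of_lt h1⟩ ⟨one_pos, le_refl 1⟩ h1
  simpa [hφ] using this

noncomputable def GB (x : ℝ) : ℝ := fB (max x 0) + min x 0

lemma fB_zero : fB 0 = 0 := by simp [fB]

lemma GB_of_nonpos {x : ℝ} (h : x ≤ 0) : GB x = x := by
  simp [GB, max_eq_right h, min_eq_left h, fB_zero]

lemma GB_of_nonneg {x : ℝ} (h : 0 ≤ x) : GB x = fB x := by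
  simp [GB, max_eq_left h, min_eq_right h]

lemma GB_strictMono : StrictMono GB := by
  intro a b hab
  rcases le_or_gt b 0 with hb | hb
  · rw [GB_of_nonpos (le_of_lt (lt_of_lt_of_le hab hb)), GB_of_nonpos hb]; exact hab
  · rw [GB_of_nonneg (le_of_lt hb)]
    rcases le_or_gt a 0 with ha | ha
    · rw [GB_of_nonpos ha]
      have h1 : fB 0 < fB b :=
        fB_strictMonoOn (mem_Ici.2 (le_refl 0)) (mem_Ici.2 (le_of_lt hb)) hb
      rw [fB_zero] at h1
      linarith
    · rw [GB_of_nonneg (le_of_lt ha)]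
      exact fB_strictMonoOn (mem_Ici.2 (le_of_lt ha)) (mem_Ici.2 (le_of_lt hb)) hab

lemma GB_continuous : Continuous GB := by
  have h1 : Continuous (fun x : ℝ => 1 + max x 0) := by fun_prop
  have h2 : Continuous (fun x : ℝ => Real.log (1 + max x 0)) := by
    apply h1.log
    intro x
    have : (0:ℝ) ≤ max x 0 := le_max_right _ _
    positivity
  have : Continuous (fun x : ℝ => max x 0 - Real.log (1 + max x 0) + min x 0) := by fun_prop
  exact this

lemma GB_surjective : Function.Surjective GB := by
  apply GB_continuous.surjective
  · have hlow : Filter.Tendsto (fun x : ℝ => x / 2 + -1) Filter.atTop Filter.atTop :=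
      Filter.tendsto_atTop_add_const_right _ (-1:ℝ)
        (Filter.tendsto_id.atTop_div_const two_pos)
    apply Filter.tendsto_atTop_mono' Filter.atTop _ hlow
    filter_upwards [Filter.eventually_ge_atTop (17:ℝ)] with x hx
    rw [GB_of_nonneg (by linarith)]
    simp only [fB]
    have h1 : (0:ℝ) < 1 + x := by linarith
    have hs : Real.sqrt (1 + x) ≤ x / 4 := by
      rw [show x / 4 = Real.sqrt ((x/4)^2) by rw [Real.sqrt_sq (by linarith)]]
      exact Real.sqrt_le_sqrt (by nlinarith)
    have h2 : Real.log (1 + x) ≤ 2 * Real.sqrt (1 + x) := by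
      have := Real.log_sqrt (le_of_lt h1)
      have h3 : Real.log (Real.sqrt (1 + x)) ≤ Real.sqrt (1 + x) - 1 :=
        Real.log_le_sub_one_of_pos (Real.sqrt_pos.2 h1)
      nlinarith
    have : Real.log (1 + x) ≤ x / 2 := by nlinarith
    linarith
  · apply Filter.Tendsto.congr' _ Filter.tendsto_id
    filter_upwards [Filter.eventually_le_atBot (0:ℝ)] with x hx
    exact (GB_of_nonpos hx).symm

noncomputable def eB : ℝ ≃o ℝ := StrictMono.orderIsoOfSurjective GB GB_strictMono GB_surjective

lemma eB_apply (x : ℝ) : eB x = GB x := rfl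

lemma GB_eB_symm (y : ℝ) : GB (eB.symm y) = y := eB.apply_symm_apply y

noncomputable def T (z : ℝ) : ℝ := eB.symm (fB (-z))

-- fB (-z) < fB (z/(1-z)) for z in (0,1)
lemma fB_key {z : ℝ} (hz : z ∈ Ioo (0:ℝ) 1) : fB (-z) < fB (z / (1 - z)) := by
  obtain ⟨h0, h1⟩ := hz
  have hs : (1 - z) ∈ Ioo (0:ℝ) 1 := ⟨by linarith, by linarith⟩
  have hphi := phi_pos hs
  have h1z : (0:ℝ) < 1 - z := by linarith
  have e1 : (1:ℝ) + z / (1 - z) = 1 / (1 - z) := by field_simp; ring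
  have e2 : fB (z / (1 - z)) = z / (1 - z) + Real.log (1 - z) := by
    simp only [fB, e1, one_div, Real.log_inv]; ring
  have e3 : fB (-z) = -z - Real.log (1 - z) := by
    simp only [fB]; rw [show (1:ℝ) + -z = 1 - z by ring]
  rw [e2, e3]
  have e4 : 1 / (1 - z) - (1 - z) = z / (1 - z) + z := by field_simp; ring
  nlinarith [hphi, e4]

lemma T_pos {z : ℝ} (hz : z ∈ Ioo (0:ℝ) 1) : 0 < T z := by
  by_contra h
  push_neg at h
  have := GB_eB_symm (fB (-z))
  rw [show eB.symm (fB (-z)) = T z from rfl, GB_of_nonpos h] at this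
  have := fB_neg_pos hz
  linarith

lemma T_eq {z : ℝ} (hz : z ∈ Ioo (0:ℝ) 1) : fB (T z) = fB (-z) := by
  have h := GB_eB_symm (fB (-z))
  rw [show eB.symm (fB (-z)) = T z from rfl, GB_of_nonneg (le_of_lt (T_pos hz))] at h
  exact h

lemma T_lt {z : ℝ} (hz : z ∈ Ioo (0:ℝ) 1) : T z < z / (1 - z) := by
  obtain ⟨h0, h1⟩ := hz
  by_contra h
  push_neg at h
  have hge : fB (z / (1 - z)) ≤ fB (T z) := by
    rcases eq_or_lt_of_le h with he | hlt
    · rw [he]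
    · exact le_of_lt (fB_strictMonoOn (mem_Ici.2 (div_nonneg (le_of_lt h0) (by linarith))) (mem_Ici.2 (le_of_lt (T_pos ⟨h0, h1⟩))) hlt)
  rw [T_eq ⟨h0, h1⟩] at hge
  exact absurd hge (not_le.2 (fB_key ⟨h0, h1⟩))

lemma T_unique {z t : ℝ} (hz : z ∈ Ioo (0:ℝ) 1) (ht : 0 < t) (he : fB t = fB (-z)) :
    t = T z := by
  apply fB_strictMonoOn.injOn (mem_Ici.2 (le_of_lt ht)) (mem_Ici.2 (le_of_lt (T_pos hz)))
  rw [he, T_eq hz]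

lemma T_hasDerivAt {z : ℝ} (hz : z ∈ Ioo (0:ℝ) 1) :
    HasDerivAt T ((T z / (1 + T z))⁻¹ * (z / (1 - z))) z := by
  obtain ⟨h0, h1⟩ := hz
  set t₀ := T z with ht₀
  have htpos : 0 < t₀ := T_pos ⟨h0, h1⟩
  -- derivative of eB.symm at y₀ := fB (-z)
  have hsymm_t : eB.symm (fB (-z)) = t₀ := rfl
  have hGB_deriv : HasDerivAt GB (t₀ / (1 + t₀)) t₀ := by
    have h := hasDerivAt_fB (x := t₀) (by linarith)
    apply h.congr_of_eventuallyEq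
    filter_upwards [eventually_gt_nhds htpos] with x hx
    exact GB_of_nonneg (le_of_lt hx)
  have hginv : HasDerivAt (fun y => eB.symm y) ((t₀ / (1 + t₀))⁻¹) (fB (-z)) := by
    apply HasDerivAt.of_local_left_inverse
      (eB.symm.continuous.continuousAt) (by rw [hsymm_t]; exact hGB_deriv)
      (by positivity)
    filter_upwards with y
    exact GB_eB_symm y
  have hinner : HasDerivAt (fun w => fB (-w)) (z / (1 - z)) z := by
    have h := (hasDerivAt_fB (x := -z) (by linarith)).comp z ((hasDerivAt_id z).neg)
    refine h.congr_deriv ?_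
    rw [show (1:ℝ) + -z = 1 - z from by ring]
    ring
  have := hginv.comp z hinner
  exact this

noncomputable def FF (z : ℝ) : ℝ := Real.log (1 + T z) - z
noncomputable def RR (z : ℝ) : ℝ := T z / z

lemma T_side {z : ℝ} (hz : z ∈ Ioo (0:ℝ) 1) : T z * (1 - z) < z := by
  obtain ⟨h0, h1⟩ := hz
  have := T_lt ⟨h0, h1⟩
  have h1z : (0:ℝ) < 1 - z := by linarith
  calc T z * (1 - z) < z / (1 - z) * (1 - z) := by
        exact mul_lt_mul_of_pos_right this h1z
    _ = z := by field_simp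

lemma FF_strictMonoOn : StrictMonoOn FF (Ioo (0:ℝ) 1) := by
  have hD : ∀ z ∈ Ioo (0:ℝ) 1, HasDerivAt FF
      ((1 + T z)⁻¹ * ((T z / (1 + T z))⁻¹ * (z / (1 - z))) - 1) z := by
    intro z hz
    have htpos := T_pos hz
    have h1t : (0:ℝ) < 1 + T z := by linarith
    have hlog : HasDerivAt (fun w => Real.log (1 + T w))
        ((1 + T z)⁻¹ * ((T z / (1 + T z))⁻¹ * (z / (1 - z)))) z := by
      have hc : HasDerivAt (fun w => 1 + T w) ((T z / (1 + T z))⁻¹ * (z / (1 - z))) z :=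
        (T_hasDerivAt hz).const_add 1
      have := (Real.hasDerivAt_log (ne_of_gt h1t)).comp z hc
      exact this.congr_deriv (by ring)
    exact hlog.sub (hasDerivAt_id z)
  apply strictMonoOn_of_deriv_pos (convex_Ioo 0 1)
  · intro z hz
    exact ((hD z hz).continuousAt).continuousWithinAt
  · intro z hz
    rw [interior_Ioo] at hz
    rw [(hD z hz).deriv]
    obtain ⟨h0, h1⟩ := hz
    have htpos := T_pos ⟨h0, h1⟩
    have hside := T_side ⟨h0, h1⟩
    have h1t : (0:ℝ) < 1 + T z := by linarith
    have h1z : (0:ℝ) < 1 - z := by linarith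
    have key : (1 + T z)⁻¹ * ((T z / (1 + T z))⁻¹ * (z / (1 - z))) = z / (T z * (1 - z)) := by
      field_simp
    rw [key, lt_sub_iff_add_lt, zero_add, lt_div_iff₀ (by positivity)]
    linarith

lemma RR_strictMonoOn : StrictMonoOn RR (Ioo (0:ℝ) 1) := by
  have hD : ∀ z ∈ Ioo (0:ℝ) 1, HasDerivAt RR
      (((((T z / (1 + T z))⁻¹ * (z / (1 - z))) * z - T z * 1) / z ^ 2)) z := by
    intro z hz
    exact (T_hasDerivAt hz).div (hasDerivAt_id z) (ne_of_gt hz.1)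
  apply strictMonoOn_of_deriv_pos (convex_Ioo 0 1)
  · intro z hz
    exact ((hD z hz).continuousAt).continuousWithinAt
  · intro z hz
    rw [interior_Ioo] at hz
    rw [(hD z hz).deriv]
    obtain ⟨h0, h1⟩ := hz
    have htpos := T_pos ⟨h0, h1⟩
    have hside := T_side ⟨h0, h1⟩
    have h1t : (0:ℝ) < 1 + T z := by linarith
    have h1z : (0:ℝ) < 1 - z := by linarith
    apply div_pos _ (by positivity)
    have key : (T z / (1 + T z))⁻¹ * (z / (1 - z)) * z = (1 + T z) * z ^ 2 / (T z * (1 - z)) := by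
      field_simp
    rw [key, mul_one, sub_pos, lt_div_iff₀ (by positivity)]
    nlinarith


theorem stmt17 (ω : ℝ → ℝ) (hω : ∀ z, ω z = (z - 1) * Real.exp z)
    (z : ℝ → ℝ)
    (hz_mem : ∀ r > (1:ℝ), z r ∈ Set.Ioo (1 - 1 / r) 1)
    (hz_ne : ∀ r > (1:ℝ), z r ≠ 0)
    (hz_eq : ∀ r > (1:ℝ), ω (z r) = ω (-(r * z r))) :
    StrictAntiOn (fun r => Real.exp (z r) / (1 + r * z r)) (Set.Ioi 1) := by
  have hmem : ∀ r ∈ Ioi (1:ℝ), z r ∈ Ioo (0:ℝ) 1 := by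
    intro r hr
    have hr1 : (1:ℝ) < r := hr
    have h := hz_mem r hr1
    have hinv : 1 / r < 1 := by rw [div_lt_one (by linarith)]; linarith
    exact ⟨lt_of_le_of_lt (by linarith) h.1, h.2⟩
  have hT : ∀ r ∈ Ioi (1:ℝ), T (z r) = r * z r := by
    intro r hr
    have hr1 : (1:ℝ) < r := hr
    obtain ⟨h0, h1⟩ := hmem r hr
    have hrz : 0 < r * z r := mul_pos (by linarith) h0
    have heq := hz_eq r hr1
    rw [hω, hω] at heq
    have hprod : (1 - z r) * Real.exp (z r) = (1 + r * z r) * Real.exp (-(r * z r)) := by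
      linear_combination -heq
    have hpos1 : 0 < (1 - z r) * Real.exp (z r) :=
      mul_pos (by linarith) (Real.exp_pos _)
    have hpos2 : 0 < 1 + r * z r := by
      by_contra h
      push_neg at h
      have h2 : (1 + r * z r) * Real.exp (-(r * z r)) ≤ 0 :=
        mul_nonpos_of_nonpos_of_nonneg h (le_of_lt (Real.exp_pos _))
      linarith [hprod ▸ hpos1]
    have hlog : Real.log (1 - z r) + z r = Real.log (1 + r * z r) - r * z r := by
      have hc := congrArg Real.log hprod
      rw [Real.log_mul (ne_of_gt (by linarith)) (ne_of_gt (Real.exp_pos _)),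
        Real.log_mul (ne_of_gt hpos2) (ne_of_gt (Real.exp_pos _)),
        Real.log_exp, Real.log_exp] at hc
      linarith
    refine (T_unique ⟨h0, h1⟩ hrz ?_).symm
    show fB (r * z r) = fB (-(z r))
    simp only [fB]
    rw [show (1:ℝ) + -(z r) = 1 - z r from by ring]
    linarith
  have hpos : ∀ r ∈ Ioi (1:ℝ), 0 < 1 + r * z r := by
    intro r hr
    have := T_pos (hmem r hr)
    rw [hT r hr] at this
    linarith
  have e1 : ∀ r ∈ Ioi (1:ℝ), Real.exp (z r) / (1 + r * z r) = Real.exp (-(FF (z r))) := by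
    intro r hr
    rw [FF, hT r hr, neg_sub, Real.exp_sub, Real.exp_log (hpos r hr)]
  intro r1 hr1 r2 hr2 h12
  have ha := hmem r1 hr1
  have hb := hmem r2 hr2
  have hRa : RR (z r1) = r1 := by
    rw [RR, hT r1 hr1, mul_div_assoc, div_self (ne_of_gt ha.1), mul_one]
  have hRb : RR (z r2) = r2 := by
    rw [RR, hT r2 hr2, mul_div_assoc, div_self (ne_of_gt hb.1), mul_one]
  have hab : z r1 < z r2 := by
    by_contra h
    push_neg at h
    rcases eq_or_lt_of_le h with he | hlt
    · rw [← hRa, ← hRb, he] at h12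
      exact lt_irrefl _ h12
    · have := RR_strictMonoOn hb ha hlt
      rw [hRa, hRb] at this
      linarith
  have hFF := FF_strictMonoOn ha hb hab
  show Real.exp (z r2) / (1 + r2 * z r2) < Real.exp (z r1) / (1 + r1 * z r1)
  rw [e1 r1 hr1, e1 r2 hr2]
  exact Real.exp_lt_exp.2 (by linarith)
end

section
/- Let r > 0 and define φ(r) = 2·(exp(-r²)/(r√π) + erf(r) - 1)^{-1} + 1, where erf(r) = (2/√π)∫₀^r e^{-t²} dt. Then φ is strictly increasing on (0, ∞), and for a Gaussian density k with mean a > 0 and variance σ₁ (so r = a/√(2σ₁)), one has ∫_{x>0} k(x)·x dx / ∫_{x<0} k(x)·|x| dx = φ(r). -/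
open Real Set MeasureTheory Filter Topology

/-!
Substituting `x = a + s t` with `s = √(2σ₁)` turns both half-line moments of `k` into the upper
partial moment `L ρ = ∫_{t > ρ} (t - ρ) e^{-t²} dt`: `M₁ = s L(-r) / √π` and `M₂ = s L(r) / √π`.
Since `L ρ = e^{-ρ²}/2 - ρ ∫_{t > ρ} e^{-t²} dt`, the symmetry of `e^{-t²}` gives
`L(-r) = L(r) + r√π`, while the bracket inverted in `φ` equals `2 L(r) / (r√π)`; hence
`M₁ / M₂ = 1 + r√π / L(r) = φ(r)`. The bracket has derivative `-e^{-r²} / (r²√π) < 0` and is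
nonnegative because `L ≥ 0`, so it is positive and strictly decreasing, and `φ` is strictly
increasing.
-/

lemma integrable_exp_neg_sq : Integrable fun t : ℝ => exp (-t ^ 2) := by
  simpa using integrable_exp_neg_mul_sq one_pos

lemma integrable_mul_exp_neg_sq : Integrable fun t : ℝ => t * exp (-t ^ 2) := by
  simpa using integrable_mul_exp_neg_mul_sq one_pos

lemma integral_Ioi_mul_exp_neg_sq (ρ : ℝ) :
    ∫ t in Ioi ρ, t * exp (-t ^ 2) = exp (-ρ ^ 2) / 2 := by
  have hderiv (t : ℝ) : HasDerivAt (fun t : ℝ => -exp (-t ^ 2) / 2) (t * exp (-t ^ 2)) t := by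
    refine (((hasDerivAt_pow 2 t).neg).exp.neg.div_const 2).congr_deriv ?_
    simp only [Pi.neg_apply, Nat.cast_ofNat]
    ring
  have hlim : Tendsto (fun t : ℝ => -exp (-t ^ 2) / 2) atTop (𝓝 0) := by
    simpa using ((tendsto_exp_atBot.comp
      (tendsto_neg_atBot_iff.mpr (tendsto_pow_atTop two_ne_zero))).neg.div_const 2)
  rw [integral_Ioi_of_hasDerivAt_of_tendsto' (fun t _ => hderiv t)
    integrable_mul_exp_neg_sq.integrableOn hlim]
  ring

lemma integral_Ioi_exp_neg_sq_eq (r : ℝ) :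
    ∫ t in Ioi r, exp (-t ^ 2) = √π / 2 - ∫ t in (0 : ℝ)..r, exp (-t ^ 2) := by
  have h0 : ∫ t in Ioi (0 : ℝ), exp (-t ^ 2) = √π / 2 := by
    simpa using integral_gaussian_Ioi 1
  rw [← h0, ← intervalIntegral.integral_Ioi_sub_Ioi' integrable_exp_neg_sq.integrableOn
    integrable_exp_neg_sq.integrableOn]
  ring

lemma integral_Ioi_neg_exp_neg_sq (ρ : ℝ) :
    ∫ t in Ioi (-ρ), exp (-t ^ 2) = √π - ∫ t in Ioi ρ, exp (-t ^ 2) := by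
  have hsymm : ∫ t in Ioi ρ, exp (-t ^ 2) = ∫ t in Iic (-ρ), exp (-t ^ 2) := by
    rw [← integral_comp_neg_Ioi]
    simp
  have htotal := intervalIntegral.integral_Iic_add_Ioi (b := -ρ)
    integrable_exp_neg_sq.integrableOn integrable_exp_neg_sq.integrableOn
  have hgauss : ∫ t : ℝ, exp (-t ^ 2) = √π := by simpa using integral_gaussian 1
  linarith

lemma integral_Ioi_comp_sub_div {E : Type*} [NormedAddCommGroup E] [NormedSpace ℝ E]
    (g : ℝ → E) (μ c : ℝ) {s : ℝ} (hs : 0 < s) :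
    ∫ x in Ioi c, g ((x - μ) / s) = s • ∫ t in Ioi ((c - μ) / s), g t := by
  have htranslate : ∫ x in Ioi c, g ((x - μ) / s) = ∫ y in Ioi (c - μ), g (y * s⁻¹) := by
    simpa [preimage_sub_const_Ioi, div_eq_mul_inv] using
      (measurePreserving_sub_right volume μ).setIntegral_preimage_emb
        (measurableEmbedding_subRight μ) (fun y => g (y * s⁻¹)) (Ioi (c - μ))
  rw [htranslate, integral_comp_mul_right_Ioi g _ (inv_pos.mpr hs), inv_inv, div_eq_mul_inv]

noncomputable def upperPartialMoment (ρ : ℝ) : ℝ :=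
  ∫ t in Ioi ρ, (t - ρ) * exp (-t ^ 2)

lemma upperPartialMoment_nonneg (ρ : ℝ) : 0 ≤ upperPartialMoment ρ :=
  setIntegral_nonneg measurableSet_Ioi fun _ ht =>
    mul_nonneg (sub_nonneg.mpr (le_of_lt ht)) (exp_pos _).le

lemma upperPartialMoment_eq (ρ : ℝ) :
    upperPartialMoment ρ = exp (-ρ ^ 2) / 2 - ρ * ∫ t in Ioi ρ, exp (-t ^ 2) := by
  simp only [upperPartialMoment, sub_mul]
  rw [integral_sub integrable_mul_exp_neg_sq.integrableOn
    (integrable_exp_neg_sq.const_mul ρ).integrableOn, integral_const_mul,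
    integral_Ioi_mul_exp_neg_sq]

lemma upperPartialMoment_neg (ρ : ℝ) :
    upperPartialMoment (-ρ) = upperPartialMoment ρ + ρ * √π := by
  rw [upperPartialMoment_eq, upperPartialMoment_eq, integral_Ioi_neg_exp_neg_sq, neg_sq]
  ring

lemma integral_Ioi_exp_neg_sq_div_mul_sub (μ c : ℝ) {s : ℝ} (hs : 0 < s) :
    ∫ x in Ioi c, exp (-((x - μ) / s) ^ 2) * (x - c) =
      s ^ 2 * upperPartialMoment ((c - μ) / s) := by
  have hintegrand : ∀ x, exp (-((x - μ) / s) ^ 2) * (x - c) =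
      s * (((x - μ) / s - (c - μ) / s) * exp (-((x - μ) / s) ^ 2)) := fun x => by
    field_simp
    ring
  simp_rw [hintegrand, integral_const_mul]
  rw [integral_Ioi_comp_sub_div (fun u => (u - (c - μ) / s) * exp (-u ^ 2)) μ c hs,
    smul_eq_mul, upperPartialMoment]
  ring

lemma integral_Iio_exp_neg_sq_div_mul_sub (μ c : ℝ) {s : ℝ} (hs : 0 < s) :
    ∫ x in Iio c, exp (-((x - μ) / s) ^ 2) * (c - x) =
      s ^ 2 * upperPartialMoment ((μ - c) / s) := by
  rw [← integral_Iic_eq_integral_Iio, ← neg_neg c, ← integral_comp_neg_Ioi]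
  convert integral_Ioi_exp_neg_sq_div_mul_sub (-μ) (-c) hs using 3 with x
  · ring_nf
  · ring

/-- `exp (-r²) / (r √π) - erfc r`, the gap in the Mills-ratio bound for `erfc`. -/
noncomputable def millsGap (r : ℝ) : ℝ :=
  exp (-r ^ 2) / (r * √π) + 2 / √π * (∫ t in (0 : ℝ)..r, exp (-t ^ 2)) - 1

lemma millsGap_eq {r : ℝ} (hr : r ≠ 0) :
    millsGap r = 2 * upperPartialMoment r / (r * √π) := by
  rw [millsGap, upperPartialMoment_eq, integral_Ioi_exp_neg_sq_eq]
  have hπ : √π ≠ 0 := by positivity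
  field_simp
  ring

lemma hasDerivAt_millsGap {r : ℝ} (hr : r ≠ 0) :
    HasDerivAt millsGap (-(exp (-r ^ 2) / (r ^ 2 * √π))) r := by
  have hexp : HasDerivAt (fun t : ℝ => exp (-t ^ 2)) (exp (-r ^ 2) * -(2 * r)) r := by
    simpa using ((hasDerivAt_pow 2 r).neg).exp
  have hlin : HasDerivAt (fun t : ℝ => t * √π) √π r := by
    simpa using (hasDerivAt_id r).mul_const √π
  have hint : HasDerivAt (fun t : ℝ => ∫ u in (0 : ℝ)..t, exp (-u ^ 2)) (exp (-r ^ 2)) r := by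
    have hc : Continuous fun u : ℝ => exp (-u ^ 2) := by fun_prop
    exact intervalIntegral.integral_hasDerivAt_right (hc.intervalIntegrable _ _)
      hc.aestronglyMeasurable.stronglyMeasurableAtFilter hc.continuousAt
  have hπ : √π ≠ 0 := by positivity
  refine (((hexp.div hlin (mul_ne_zero hr hπ)).add
    (hint.const_mul (2 / √π))).sub_const 1).congr_deriv ?_
  field_simp
  ring

lemma millsGap_strictAntiOn : StrictAntiOn millsGap (Ioi 0) := by
  refine strictAntiOn_of_deriv_neg (convex_Ioi 0)
    (fun r hr => (hasDerivAt_millsGap (ne_of_gt hr)).continuousAt.continuousWithinAt)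
    fun r hr => ?_
  rw [interior_Ioi] at hr
  rw [(hasDerivAt_millsGap (ne_of_gt hr)).deriv, neg_lt_zero]
  have : 0 < r := hr
  positivity

lemma millsGap_pos {r : ℝ} (hr : 0 < r) : 0 < millsGap r := by
  have hnext : 0 ≤ millsGap (r + 1) := by
    rw [millsGap_eq (by positivity)]
    have := upperPartialMoment_nonneg (r + 1)
    positivity
  exact hnext.trans_lt (millsGap_strictAntiOn hr (mem_Ioi.mpr (by positivity)) (lt_add_one r))

lemma upperPartialMoment_pos {r : ℝ} (hr : 0 < r) : 0 < upperPartialMoment r := by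
  have h := millsGap_pos hr
  rw [millsGap_eq hr.ne'] at h
  have : 0 < r * √π := by positivity
  linarith [(div_pos_iff_of_pos_right this).mp h]

lemma rpow_neg_half_mul_exp_eq {σ : ℝ} (hσ : 0 < σ) (y : ℝ) :
    (2 * π * σ) ^ (-(1 : ℝ) / 2) * exp (-y ^ 2 / (2 * σ)) =
      (√π * √(2 * σ))⁻¹ * exp (-(y / √(2 * σ)) ^ 2) := by
  rw [show 2 * π * σ = π * (2 * σ) by ring, div_pow, sq_sqrt (by positivity), neg_div,
    rpow_neg (by positivity), ← sqrt_eq_rpow, sqrt_mul pi_pos.le, neg_div]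

theorem stmt19 (a σ₁ : ℝ) (ha : 0 < a) (hσ₁ : 0 < σ₁)
    (erf : ℝ → ℝ)
    (herf : ∀ r, erf r = 2 / Real.sqrt Real.pi * ∫ t in (0:ℝ)..r, Real.exp (-t ^ 2))
    (φ : ℝ → ℝ)
    (hφ : ∀ r, φ r = 2 * (Real.exp (-r ^ 2) / (r * Real.sqrt Real.pi) + erf r - 1)⁻¹ + 1)
    (k : ℝ → ℝ)
    (hk : ∀ x, k x = (2 * Real.pi * σ₁) ^ (-(1:ℝ)/2) *
      Real.exp (-(x - a) ^ 2 / (2 * σ₁))) :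
    StrictMonoOn φ (Set.Ioi 0) ∧
    (∫ x in Set.Ioi (0:ℝ), k x * x) / (∫ x in Set.Iio (0:ℝ), k x * |x|) =
      φ (a / Real.sqrt (2 * σ₁)) := by
  have hφ_eq (r : ℝ) : φ r = 2 * (millsGap r)⁻¹ + 1 := by rw [hφ, herf, millsGap]
  refine ⟨fun x hx y hy hxy => ?_, ?_⟩
  · rw [hφ_eq, hφ_eq]
    linarith [inv_strictAnti₀ (millsGap_pos hy) (millsGap_strictAntiOn hx hy hxy)]
  set s := √(2 * σ₁)
  have hs : 0 < s := by positivity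
  have hr : 0 < a / s := by positivity
  have hk_eq (x : ℝ) : k x = (√π * s)⁻¹ * exp (-((x - a) / s) ^ 2) := by
    rw [hk, rpow_neg_half_mul_exp_eq hσ₁]
  have hM₁ : ∫ x in Ioi 0, k x * x = (√π * s)⁻¹ * (s ^ 2 * upperPartialMoment (-(a / s))) := by
    simp_rw [hk_eq, mul_assoc, integral_const_mul]
    congr 1
    simpa [neg_div] using integral_Ioi_exp_neg_sq_div_mul_sub a 0 hs
  have hM₂ : ∫ x in Iio 0, k x * |x| = (√π * s)⁻¹ * (s ^ 2 * upperPartialMoment (a / s)) := by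
    have habs : ∫ x in Iio 0, k x * |x| =
        ∫ x in Iio 0, (√π * s)⁻¹ * (exp (-((x - a) / s) ^ 2) * (0 - x)) :=
      setIntegral_congr_fun measurableSet_Iio fun x (hx : x < 0) => by
        rw [hk_eq, abs_of_neg hx]
        ring
    rw [habs, integral_const_mul, integral_Iio_exp_neg_sq_div_mul_sub a 0 hs, sub_zero]
  have hM := upperPartialMoment_pos hr
  rw [hM₁, hM₂, upperPartialMoment_neg, hφ_eq, millsGap_eq hr.ne']
  field_simp
  ring
end
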